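/- arXiv:2605.31541 — 2 statements merged into one kernel-verified Lean document; each statement's English description precedes it below -/
import Mathlib

section
/- Let f : ℝ² → ℝ be α-Hölder continuous with 0 < α ≤ 1 and Hölder seminorm [f]_{C^α}. Suppose for some reals b < a the superlevel set E_a = {x : f(x) > a} is nonempty with C¹ boundary and connected, and E_b = {x : f(x) > b} has finite Lebesgue measure. Then [f]_{C^α} ≥ (a − b) · (2 · diam(E_a) / |E_b|)^α. -/
/-!
If `[f]_{C^α} = H` and `H δ^α = a - b`, a point within `δ` of `E_a` has `f > a - H δ^α = b`, so
the `δ`-neighbourhood of `E_a` lies in `E_b`. In orthonormal coordinates whose first axis points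
from `x ∈ E_a` to `y ∈ E_a`, connectedness of `E_a` makes every vertical line over the segment
between their first coordinates meet `E_a`, and there the `δ`-neighbourhood contains a vertical
segment of length `2δ`. Fubini gives `|E_b| ≥ 2 δ |x - y|`, hence `2 δ diam E_a ≤ |E_b|`, which
rearranges to the claim.
-/

open MeasureTheory Metric Set

theorem MeasureTheory.Measure.mul_le_prod_apply_of_forall_le
    {α β : Type*} [MeasurableSpace α] [MeasurableSpace β] {μ : Measure α} {ν : Measure β}
    [SFinite ν] {A : Set (α × β)} (hA : MeasurableSet A) {S : Set α} {m : ENNReal}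
    (h : ∀ t ∈ S, m ≤ ν (Prod.mk t ⁻¹' A)) :
    m * μ S ≤ μ.prod ν A :=
  calc m * μ S = ∫⁻ _ in S, m ∂μ := (setLIntegral_const S m).symm
    _ ≤ ∫⁻ t in S, ν (Prod.mk t ⁻¹' A) ∂μ := setLIntegral_mono (measurable_measure_prodMk_left hA) h
    _ ≤ ∫⁻ t, ν (Prod.mk t ⁻¹' A) ∂μ := setLIntegral_le_lintegral _ _
    _ = μ.prod ν A := (Measure.prod_apply hA).symm

section InnerProductSpace

variable {E : Type*} [NormedAddCommGroup E] [InnerProductSpace ℝ E]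

theorem exists_orthonormalBasis_apply_eq [FiniteDimensional ℝ E] {n : ℕ}
    (hE : Module.finrank ℝ E = n) (i : Fin n) {u : E} (hu : ‖u‖ = 1) :
    ∃ b : OrthonormalBasis (Fin n) ℝ E, b i = u := by
  obtain ⟨b, hb⟩ := Orthonormal.exists_orthonormalBasis_extension_of_card_eq
    (v := fun _ => u) (s := {i}) (by simpa using hE) ⟨fun _ => hu, fun j k hjk =>
      (hjk (Subtype.ext (j.2.trans k.2.symm))).elim⟩
  exact ⟨b, hb i rfl⟩

variable [MeasurableSpace E] [BorelSpace E]

noncomputable def OrthonormalBasis.measurableEquivProd (b : OrthonormalBasis (Fin 2) ℝ E) :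
    E ≃ᵐ ℝ × ℝ :=
  (b.measurableEquiv.trans (MeasurableEquiv.toLp 2 (Fin 2 → ℝ)).symm).trans
    MeasurableEquiv.finTwoArrow

theorem OrthonormalBasis.measurableEquivProd_apply (b : OrthonormalBasis (Fin 2) ℝ E) (p : E) :
    b.measurableEquivProd p = (inner ℝ (b 0) p, inner ℝ (b 1) p) := by
  simp [measurableEquivProd, measurableEquiv, b.repr_apply_apply]

theorem OrthonormalBasis.measurePreserving_measurableEquivProd [FiniteDimensional ℝ E]
    (b : OrthonormalBasis (Fin 2) ℝ E) : MeasurePreserving b.measurableEquivProd :=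
  (volume_preserving_finTwoArrow ℝ).comp
    ((EuclideanSpace.volume_preserving_symm_measurableEquiv_toLp (Fin 2)).comp
      b.measurePreserving_measurableEquiv)

theorem OrthonormalBasis.measurableEquivProd_symm_mem_thickening
    (b : OrthonormalBasis (Fin 2) ℝ E) {s : Set E} {δ r : ℝ} {p : E} (hp : p ∈ s)
    (hr : |r - inner ℝ (b 1) p| < δ) :
    b.measurableEquivProd.symm (inner ℝ (b 0) p, r) ∈ thickening δ s := by
  have hT : b.measurableEquivProd (p + (r - inner ℝ (b 1) p) • b 1) = (inner ℝ (b 0) p, r) := by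
    simp [b.measurableEquivProd_apply, inner_add_right, real_inner_smul_right,
      b.orthonormal.inner_eq_zero, b.orthonormal.1 1]
  rw [← hT, MeasurableEquiv.symm_apply_apply]
  refine mem_thickening_iff.2 ⟨p, hp, ?_⟩
  rwa [dist_eq_norm, add_sub_cancel_left, norm_smul, b.orthonormal.1 1, mul_one, Real.norm_eq_abs]

theorem ofReal_two_mul_mul_edist_le_volume_thickening [FiniteDimensional ℝ E]
    (hE : Module.finrank ℝ E = 2) {s : Set E} (hs : IsPreconnected s) (δ : ℝ) {x y : E}
    (hx : x ∈ s) (hy : y ∈ s) :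
    ENNReal.ofReal (2 * δ) * edist x y ≤ volume (thickening δ s) := by
  rcases eq_or_ne x y with rfl | hxy
  · simp
  have hyx : 0 < ‖y - x‖ := norm_pos_iff.2 (sub_ne_zero.2 hxy.symm)
  obtain ⟨b, hb⟩ := exists_orthonormalBasis_apply_eq hE 0 (u := ‖y - x‖⁻¹ • (y - x))
    (by rw [norm_smul, norm_inv, norm_norm, inv_mul_cancel₀ hyx.ne'])
  set A := b.measurableEquivProd.symm ⁻¹' thickening δ s
  have hA : MeasurableSet A :=
    isOpen_thickening.measurableSet.preimage b.measurableEquivProd.symm.measurable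
  have hproj : Icc (inner ℝ (b 0) x) (inner ℝ (b 0) y) ⊆ (fun p => inner ℝ (b 0) p) '' s :=
    (hs.image _ (continuous_const.inner continuous_id).continuousOn).ordConnected.out
      (mem_image_of_mem _ hx) (mem_image_of_mem _ hy)
  have hslice : ∀ t ∈ Icc (inner ℝ (b 0) x) (inner ℝ (b 0) y),
      ENNReal.ofReal (2 * δ) ≤ volume (Prod.mk t ⁻¹' A) := by
    rintro t ht
    obtain ⟨p, hp, rfl⟩ := hproj ht
    calc ENNReal.ofReal (2 * δ)
        = volume (Ioo (inner ℝ (b 1) p - δ) (inner ℝ (b 1) p + δ)) := by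
          rw [Real.volume_Ioo]; ring_nf
      _ ≤ volume (Prod.mk (inner ℝ (b 0) p) ⁻¹' A) := measure_mono fun r hr =>
          b.measurableEquivProd_symm_mem_thickening hp
            (abs_sub_lt_iff.2 ⟨by linarith [hr.2], by linarith [hr.1]⟩)
  have hlen : inner ℝ (b 0) y - inner ℝ (b 0) x = dist x y := by
    rw [← inner_sub_right, hb, real_inner_smul_left, real_inner_self_eq_norm_sq, dist_comm,
      dist_eq_norm]
    field_simp
  calc ENNReal.ofReal (2 * δ) * edist x y
      = ENNReal.ofReal (2 * δ) * volume (Icc (inner ℝ (b 0) x) (inner ℝ (b 0) y)) := by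
        rw [Real.volume_Icc, hlen, edist_dist]
    _ ≤ volume A := by
        rw [Measure.volume_eq_prod]; exact Measure.mul_le_prod_apply_of_forall_le hA hslice
    _ = volume (thickening δ s) :=
        b.measurePreserving_measurableEquivProd.symm.measure_preimage_equiv _

theorem ofReal_two_mul_mul_ediam_le_volume_thickening [FiniteDimensional ℝ E]
    (hE : Module.finrank ℝ E = 2) {s : Set E} (hs : IsPreconnected s) (δ : ℝ) :
    ENNReal.ofReal (2 * δ) * ediam s ≤ volume (thickening δ s) := by
  simp only [ediam, ENNReal.mul_iSup, iSup_le_iff]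
  exact fun x hx y hy => ofReal_two_mul_mul_edist_le_volume_thickening hE hs δ hx hy

end InnerProductSpace

theorem thickening_setOf_lt_subset {X : Type*} [PseudoMetricSpace X] {f : X → ℝ}
    {α H a b δ : ℝ} (hα : 0 ≤ α) (hH : 0 ≤ H) (hf : ∀ x y, |f x - f y| ≤ H * dist x y ^ α)
    (hδ : H * δ ^ α ≤ a - b) :
    thickening δ {x | a < f x} ⊆ {x | b < f x} := by
  intro z hz
  obtain ⟨p, hp, hpz⟩ := mem_thickening_iff.1 hz
  have hdist : dist p z ^ α ≤ δ ^ α :=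
    Real.rpow_le_rpow dist_nonneg ((dist_comm p z).trans_le hpz.le) hα
  have hHdist := mul_le_mul_of_nonneg_left hdist hH
  have hfpz := (le_abs_self _).trans (hf p z)
  show b < f z
  linarith [show a < f p from hp]

theorem stmt0_holder_seminorm_lower_bound_general
    (f : EuclideanSpace ℝ (Fin 2) → ℝ) (α H a b : ℝ)
    (hα : 0 < α) (hH : 0 ≤ H)
    (hHolder : ∀ x y, |f x - f y| ≤ H * dist x y ^ α)
    (hab : b < a)
    (hconn : IsConnected {x | a < f x}) :
    (a - b) * (2 * Metric.diam {x | a < f x} / (volume {x | b < f x}).toReal) ^ α ≤ H := by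
  set d := Metric.diam {x | a < f x}
  set v := (volume {x | b < f x}).toReal
  rcases (ENNReal.toReal_nonneg : 0 ≤ v).eq_or_lt with hv | hv
  · rw [show v = 0 from hv.symm, div_zero, Real.zero_rpow hα.ne', mul_zero]; exact hH
  have hfin : volume {x | b < f x} ≠ ⊤ := (ENNReal.toReal_pos_iff.1 hv).2.ne
  have hH₀ : 0 < H := by
    refine hH.lt_of_ne' fun hH₀ => hfin ?_
    obtain ⟨x₀, hx₀⟩ := hconn.nonempty
    have hf : ∀ x, f x = f x₀ := fun x => by simpa [hH₀, sub_eq_zero] using hHolder x x₀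
    simp [hf, hab.trans hx₀]
  obtain ⟨δ, hδ, hHδ⟩ : ∃ δ, 0 < δ ∧ H * δ ^ α = a - b :=
    ⟨((a - b) / H) ^ α⁻¹, by positivity, by
      rw [← Real.rpow_mul (by positivity), inv_mul_cancel₀ hα.ne', Real.rpow_one,
        mul_div_cancel₀ _ hH₀.ne']⟩
  have hdv : 2 * δ * d ≤ v := by
    have := (ofReal_two_mul_mul_ediam_le_volume_thickening finrank_euclideanSpace_fin
      hconn.isPreconnected δ).trans
      (measure_mono (thickening_setOf_lt_subset hα.le hH hHolder hHδ.le))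
    simpa [ENNReal.toReal_mul, hδ.le, d, diam] using ENNReal.toReal_mono hfin this
  calc (a - b) * (2 * d / v) ^ α ≤ (a - b) * δ⁻¹ ^ α := by
        gcongr
        rw [div_le_iff₀ hv, inv_mul_eq_div, le_div_iff₀ hδ]
        linarith
    _ = H := by
        rw [Real.inv_rpow hδ.le, ← hHδ]; field_simp [(Real.rpow_pos_of_pos hδ α).ne']

/-- If `f : ℝ² → ℝ` is `α`-Hölder with constant `H` (in particular if `H` is
its Hölder seminorm), `b < a`, the superlevel set `E_a = {f > a}` is nonempty and connected,
and `E_b = {f > b}` has finite Lebesgue measure, then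
`H ≥ (a - b) * (2 * diam E_a / |E_b|) ^ α`. -/
theorem stmt0_holder_seminorm_lower_bound
    (f : EuclideanSpace ℝ (Fin 2) → ℝ) (α H a b : ℝ)
    (hα : 0 < α) (hα1 : α ≤ 1) (hH : 0 ≤ H)
    (hHolder : ∀ x y, |f x - f y| ≤ H * dist x y ^ α)
    (hab : b < a)
    (hne : ({x | a < f x}).Nonempty)
    (hconn : IsConnected {x | a < f x})
    (hfin : volume {x | b < f x} < ⊤) :
    (a - b) * (2 * Metric.diam {x | a < f x} / (volume {x | b < f x}).toReal) ^ α ≤ H :=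
  stmt0_holder_seminorm_lower_bound_general f α H a b hα hH hHolder hab hconn
end

section
/- If E_b contains the closed δ-neighborhood of a connected bounded set E_a in ℝ², then the Lebesgue measure of E_b is at least 2δ · diam(E_a). -/
/-! If `x, y ∈ E_a` and `u` is the unit vector along `y - x`, connectedness gives for every `t`
between `⟪u, x⟫` and `⟪u, y⟫` a point `p ∈ E_a` with `⟪u, p⟫ = t`, and the `δ`-neighbourhood
contains the segment of length `2δ` through `p` orthogonal to `u`. In orthonormal coordinates
adapted to `u`, every slice of the neighbourhood over `[⟪u, x⟫, ⟪u, y⟫]` thus has length at least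
`2δ`, so by Fubini its area is at least `2δ · dist x y`; the supremum over `x, y` is
`2δ · diam E_a`. -/

open MeasureTheory Metric Set

open scoped RealInnerProductSpace ENNReal

theorem MeasureTheory.Measure.mul_measure_le_prod_of_le_measure_slice
    {α β : Type*} [MeasurableSpace α] [MeasurableSpace β] {μ : Measure α} {ν : Measure β}
    [SFinite ν] {s : Set α} {M : Set (α × β)} {c : ℝ≥0∞}
    (h : ∀ x ∈ s, c ≤ ν (Prod.mk x ⁻¹' M)) : c * μ s ≤ μ.prod ν M := by
  set T := toMeasurable (μ.prod ν) M
  have hT : MeasurableSet T := measurableSet_toMeasurable _ _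
  calc c * μ s = ∫⁻ _ in s, c ∂μ := (setLIntegral_const s c).symm
    _ ≤ ∫⁻ x in s, ν (Prod.mk x ⁻¹' T) ∂μ :=
      setLIntegral_mono (measurable_measure_prodMk_left hT) fun x hx =>
        (h x hx).trans (measure_mono (preimage_mono (subset_toMeasurable _ _)))
    _ ≤ ∫⁻ x, ν (Prod.mk x ⁻¹' T) ∂μ := setLIntegral_le_lintegral _ _
    _ = μ.prod ν M := by rw [← Measure.prod_apply hT, measure_toMeasurable]

section Plane

variable {E : Type*} [NormedAddCommGroup E] [InnerProductSpace ℝ E]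

theorem exists_orthonormalBasis_fin_two_apply_zero [FiniteDimensional ℝ E]
    (hE : Module.finrank ℝ E = 2) {u : E} (hu : ‖u‖ = 1) : ∃ B : OrthonormalBasis (Fin 2) ℝ E, B 0 = u := by
  have hortho : Orthonormal ℝ (({0} : Set (Fin 2)).domRestrict fun _ => u) :=
    ⟨fun _ => hu, fun i j hij => absurd (Subtype.ext (i.2.trans j.2.symm)) hij⟩
  obtain ⟨B, hB⟩ := hortho.exists_orthonormalBasis_extension_of_card_eq (by simp [hE])
  exact ⟨B, hB 0 rfl⟩

variable [MeasurableSpace E] [BorelSpace E]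

noncomputable def OrthonormalBasis.planeCoords (B : OrthonormalBasis (Fin 2) ℝ E) : E ≃ᵐ ℝ × ℝ :=
  B.measurableEquiv.trans ((MeasurableEquiv.toLp 2 (Fin 2 → ℝ)).symm.trans
    MeasurableEquiv.finTwoArrow)

theorem OrthonormalBasis.planeCoords_apply (B : OrthonormalBasis (Fin 2) ℝ E) (x : E) :
    B.planeCoords x = (⟪B 0, x⟫, ⟪B 1, x⟫) := by
  simp [planeCoords, OrthonormalBasis.measurableEquiv, B.repr_apply_apply]

theorem OrthonormalBasis.Icc_subset_preimage_planeCoords_image (B : OrthonormalBasis (Fin 2) ℝ E)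
    {S : Set E} {p : E} {δ : ℝ} (hp : closedBall p δ ⊆ S) :
    Icc (⟪B 1, p⟫ - δ) (⟪B 1, p⟫ + δ) ⊆ Prod.mk ⟪B 0, p⟫ ⁻¹' (B.planeCoords '' S) := by
  intro s hs
  refine ⟨p + (s - ⟪B 1, p⟫) • B 1, hp ?_, ?_⟩
  · rw [mem_closedBall, dist_eq_norm, add_sub_cancel_left, norm_smul, B.orthonormal.1 1, mul_one,
      Real.norm_eq_abs, abs_le]
    constructor <;> linarith [hs.1, hs.2]
  · have h01 : ⟪B 0, B 1⟫ = 0 := B.orthonormal.2 (by decide)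
    have h11 : ⟪B 1, B 1⟫ = 1 := by rw [real_inner_self_eq_norm_sq, B.orthonormal.1 1]; norm_num
    simp only [planeCoords_apply, inner_add_right, real_inner_smul_right, h01, h11]
    congr 1 <;> ring

variable [FiniteDimensional ℝ E]

theorem OrthonormalBasis.measurePreserving_planeCoords (B : OrthonormalBasis (Fin 2) ℝ E) :
    MeasurePreserving B.planeCoords volume volume :=
  (volume_preserving_finTwoArrow ℝ).comp
    ((EuclideanSpace.volume_preserving_symm_measurableEquiv_toLp (Fin 2)).comp
      B.measurePreserving_measurableEquiv)

theorem ofReal_mul_le_volume_of_forall_closedBall_subset (hE : Module.finrank ℝ E = 2) {u : E}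
    (hu : ‖u‖ = 1) {S : Set E} {a b δ : ℝ}
    (hS : ∀ t ∈ Icc a b, ∃ p, ⟪u, p⟫ = t ∧ closedBall p δ ⊆ S) :
    ENNReal.ofReal (2 * δ) * ENNReal.ofReal (b - a) ≤ volume S := by
  obtain ⟨B, rfl⟩ := exists_orthonormalBasis_fin_two_apply_zero hE hu
  have hslice : ∀ t ∈ Icc a b,
      ENNReal.ofReal (2 * δ) ≤ volume (Prod.mk t ⁻¹' (B.planeCoords '' S)) := by
    intro t ht
    obtain ⟨p, rfl, hp⟩ := hS t ht
    calc ENNReal.ofReal (2 * δ) = volume (Icc (⟪B 1, p⟫ - δ) (⟪B 1, p⟫ + δ)) := by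
          rw [Real.volume_Icc]; ring_nf
      _ ≤ _ := measure_mono (B.Icc_subset_preimage_planeCoords_image hp)
  calc ENNReal.ofReal (2 * δ) * ENNReal.ofReal (b - a)
      = ENNReal.ofReal (2 * δ) * volume (Icc a b) := by rw [Real.volume_Icc]
    _ ≤ volume (B.planeCoords '' S) :=
      Measure.mul_measure_le_prod_of_le_measure_slice hslice
    _ = volume S := by
      rw [← B.measurePreserving_planeCoords.measure_preimage_equiv,
        preimage_image_eq _ B.planeCoords.injective]

theorem IsPreconnected.ofReal_mul_dist_le_volume_cthickening (hE : Module.finrank ℝ E = 2)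
    {K : Set E} (hK : IsPreconnected K) {x y : E} (hx : x ∈ K) (hy : y ∈ K) (δ : ℝ) :
    ENNReal.ofReal (2 * δ) * ENNReal.ofReal (dist x y) ≤ volume (cthickening δ K) := by
  rcases eq_or_ne x y with rfl | hxy
  · simp
  set u := ‖y - x‖⁻¹ • (y - x)
  have hu : ‖u‖ = 1 := norm_smul_inv_norm (sub_ne_zero.2 hxy.symm)
  have hlen : ⟪u, y⟫ - ⟪u, x⟫ = dist x y := by
    rw [← inner_sub_right, real_inner_smul_left, real_inner_self_eq_norm_sq, dist_comm,
      dist_eq_norm]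
    field_simp [norm_ne_zero_iff.2 (sub_ne_zero.2 hxy.symm)]
  rw [← hlen]
  refine ofReal_mul_le_volume_of_forall_closedBall_subset hE hu fun t ht => ?_
  obtain ⟨p, hp, rfl⟩ :=
    hK.intermediate_value hx hy (continuous_const.inner continuous_id).continuousOn ht
  exact ⟨p, rfl, closedBall_subset_cthickening hp δ⟩

end Plane

theorem stmt1_neighborhood_area_lower_bound_general
    (Ea Eb : Set (EuclideanSpace ℝ (Fin 2))) (δ : ℝ)
    (hconn : IsConnected Ea)
    (hsub : {x | EMetric.infEdist x Ea ≤ ENNReal.ofReal δ} ⊆ Eb) :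
    ENNReal.ofReal (2 * δ * Metric.diam Ea) ≤ volume Eb := by
  calc ENNReal.ofReal (2 * δ * diam Ea)
      = ENNReal.ofReal (2 * δ) * ENNReal.ofReal (diam Ea) := ENNReal.ofReal_mul' diam_nonneg
    _ ≤ ENNReal.ofReal (2 * δ) * ediam Ea := by gcongr; exact ENNReal.ofReal_toReal_le
    _ ≤ volume (cthickening δ Ea) := by
      simp only [ediam, ENNReal.mul_iSup, iSup_le_iff]
      intro x hx y hy
      rw [edist_dist]
      exact hconn.isPreconnected.ofReal_mul_dist_le_volume_cthickening (by simp) hx hy δ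
    _ ≤ volume Eb := measure_mono hsub

/-- If `E_b` contains the closed `δ`-neighborhood of a nonempty bounded
connected set `E_a ⊆ ℝ²`, then the Lebesgue measure of `E_b` is at least `2δ·diam E_a`. -/
theorem stmt1_neighborhood_area_lower_bound
    (Ea Eb : Set (EuclideanSpace ℝ (Fin 2))) (δ : ℝ) (hδ : 0 < δ)
    (hne : Ea.Nonempty) (hbdd : Bornology.IsBounded Ea) (hconn : IsConnected Ea)
    (hsub : {x | EMetric.infEdist x Ea ≤ ENNReal.ofReal δ} ⊆ Eb) :
    ENNReal.ofReal (2 * δ * Metric.diam Ea) ≤ volume Eb :=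
  stmt1_neighborhood_area_lower_bound_general Ea Eb δ hconn hsub
end
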